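/- arXiv:2601.13110 — 6 statements merged into one kernel-verified Lean document; each statement's English description precedes it below -/
import Mathlib

section
/- Let $(\delta_n)_{n=0}^N$ be a sequence of non-negative reals, $(\mu_n)_{n=1}^N$ a sequence of positive reals, and $\alpha>0$. If $\delta_{n+1}\le \delta_n - \mu_{n+1}\delta_n^{1+\alpha}$ for all $n=0,\ldots,N-1$, then $\delta_N \le \delta_0\,(1+\alpha\,\delta_0^{\alpha}\sum_{n=1}^{N}\mu_n)^{-1/\alpha}$. -/
open Finset

private lemma bern_aux {t α : ℝ} (ht : 0 ≤ t) (ht1 : t < 1) (hα : 0 < α) :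
    1 + α * t ≤ (1 - t) ^ (-α) := by
  have h1t : (0:ℝ) < 1 - t := by linarith
  rw [Real.rpow_neg h1t.le, le_inv_comm₀ (by positivity) (Real.rpow_pos_of_pos h1t _)]
  calc ((1:ℝ) + α * t)⁻¹ ≥ (Real.exp (α * t))⁻¹ := by
        apply inv_anti₀ (by positivity)
        linarith [Real.add_one_le_exp (α * t)]
    _ = Real.exp (-(α * t)) := by rw [Real.exp_neg]
    _ ≥ (1 - t) ^ α := by
        rw [Real.rpow_def_of_pos h1t]
        apply Real.exp_le_exp.mpr
        have := Real.log_le_sub_one_of_pos h1t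
        nlinarith [Real.log_le_sub_one_of_pos h1t]

private lemma step_aux {a b μ α : ℝ} (ha : 0 < a) (hb : 0 < b) (hμ : 0 < μ) (hα : 0 < α)
    (h : a ≤ b - μ * b ^ (1 + α)) : b ^ (-α) + α * μ ≤ a ^ (-α) := by
  set t : ℝ := μ * b ^ α with htdef
  have hbα : (0:ℝ) < b ^ α := Real.rpow_pos_of_pos hb _
  have ht0 : 0 < t := by positivity
  have hbt : b - μ * b ^ (1 + α) = b * (1 - t) := by
    rw [Real.rpow_one_add' hb.le (by positivity)]; ring
  have ht1 : t < 1 := by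
    by_contra hc
    push_neg at hc
    have : b * (1 - t) ≤ 0 := mul_nonpos_of_nonneg_of_nonpos hb.le (by linarith)
    rw [hbt] at h; linarith
  have h1t : (0:ℝ) < 1 - t := by linarith
  have key : (b * (1 - t)) ^ (-α) ≤ a ^ (-α) :=
    Real.rpow_le_rpow_of_nonpos ha (h.trans_eq hbt) (by linarith)
  have hmul : (b * (1 - t)) ^ (-α) = b ^ (-α) * (1 - t) ^ (-α) :=
    Real.mul_rpow hb.le h1t.le
  have hbern := bern_aux ht0.le ht1 hα
  have hbneg : (0:ℝ) < b ^ (-α) := Real.rpow_pos_of_pos hb _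
  have hcancel : b ^ (-α) * b ^ α = 1 := by
    rw [← Real.rpow_add hb]; simp
  calc b ^ (-α) + α * μ = b ^ (-α) * (1 + α * t) := by
        have hexp : b ^ (-α) * (1 + α * t) = b ^ (-α) + α * μ * (b ^ (-α) * b ^ α) := by
          rw [htdef]; ring
        rw [hexp, hcancel, mul_one]
    _ ≤ b ^ (-α) * (1 - t) ^ (-α) := by
        apply mul_le_mul_of_nonneg_left hbern hbneg.le
    _ = (b * (1 - t)) ^ (-α) := hmul.symm
    _ ≤ a ^ (-α) := key

/-- Polyak's inequality. -/
theorem polyak_inequality (N : ℕ) (δ μ : ℕ → ℝ) (α : ℝ) (hα : 0 < α)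
    (hδ : ∀ n, 0 ≤ δ n) (hμ : ∀ n, 0 < μ n)
    (hrec : ∀ n < N, δ (n + 1) ≤ δ n - μ (n + 1) * δ n ^ (1 + α)) :
    δ N ≤ δ 0 * (1 + α * δ 0 ^ α * ∑ n ∈ Finset.Icc 1 N, μ n) ^ (-(1 / α)) := by
  have hS : 0 ≤ ∑ n ∈ Finset.Icc 1 N, μ n :=
    Finset.sum_nonneg fun i _ => (hμ i).le
  have hbase : (0:ℝ) < 1 + α * δ 0 ^ α * ∑ n ∈ Finset.Icc 1 N, μ n := by
    have h1 : 0 ≤ δ 0 ^ α := Real.rpow_nonneg (hδ 0) _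
    have h2 := mul_nonneg (mul_nonneg hα.le h1) hS
    linarith
  by_cases hpos : ∀ k ≤ N, 0 < δ k
  · -- all positive case
    have hδ0 : 0 < δ 0 := hpos 0 (Nat.zero_le _)
    have main : ∀ n, n ≤ N →
        δ 0 ^ (-α) + α * ∑ i ∈ Finset.Icc 1 n, μ i ≤ δ n ^ (-α) := by
      intro n hn
      induction n with
      | zero => simp
      | succ m ih =>
        have hm : m ≤ N := Nat.le_of_succ_le hn
        have ihm := ih hm
        have hsum : ∑ i ∈ Finset.Icc 1 (m + 1), μ i
            = (∑ i ∈ Finset.Icc 1 m, μ i) + μ (m + 1) := by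
          rw [show Finset.Icc 1 (m+1) = Finset.Ioc 0 (m+1) from Finset.Icc_add_one_left_eq_Ioc 0 _,
            show Finset.Icc 1 m = Finset.Ioc 0 m from Finset.Icc_add_one_left_eq_Ioc 0 _,
            Finset.sum_Ioc_succ_top (Nat.zero_le _)]
        have hstep := step_aux (hpos (m + 1) hn) (hpos m hm) (hμ (m + 1)) hα
          (hrec m (Nat.lt_of_succ_le hn))
        rw [hsum]
        calc δ 0 ^ (-α) + α * ((∑ i ∈ Finset.Icc 1 m, μ i) + μ (m + 1))
            = (δ 0 ^ (-α) + α * ∑ i ∈ Finset.Icc 1 m, μ i) + α * μ (m + 1) := by ring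
          _ ≤ δ m ^ (-α) + α * μ (m + 1) := by linarith
          _ ≤ δ (m + 1) ^ (-α) := hstep
    have hmain := main N le_rfl
    set S := ∑ n ∈ Finset.Icc 1 N, μ n
    have hT : δ 0 ^ (-α) + α * S = δ 0 ^ (-α) * (1 + α * δ 0 ^ α * S) := by
      have hcancel : δ 0 ^ (-α) * δ 0 ^ α = 1 := by
        rw [← Real.rpow_add hδ0]; simp
      have hexp : δ 0 ^ (-α) * (1 + α * δ 0 ^ α * S)
          = δ 0 ^ (-α) + α * S * (δ 0 ^ (-α) * δ 0 ^ α) := by ring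
      rw [hexp, hcancel, mul_one]
    have hTpos : 0 < δ 0 ^ (-α) + α * S := by
      have := Real.rpow_pos_of_pos hδ0 (-α); nlinarith
    have hNpos := hpos N le_rfl
    have happ : (δ N ^ (-α)) ^ (-(1/α)) ≤ (δ 0 ^ (-α) + α * S) ^ (-(1/α)) :=
      Real.rpow_le_rpow_of_nonpos hTpos hmain (neg_nonpos.mpr (by positivity))
    have hL : (δ N ^ (-α)) ^ (-(1/α)) = δ N := by
      rw [← Real.rpow_mul (hδ N), show -α * -(1/α) = 1 by field_simp, Real.rpow_one]
    rw [hL] at happ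
    refine happ.trans_eq ?_
    rw [hT, Real.mul_rpow (Real.rpow_pos_of_pos hδ0 _).le hbase.le,
      ← Real.rpow_mul hδ0.le]
    congr 1
    · rw [show -α * -(1/α) = 1 by field_simp, Real.rpow_one]
  · -- some δ k = 0 with k ≤ N, then δ N = 0
    push_neg at hpos
    obtain ⟨k, hk, hk0⟩ := hpos
    have hkz : δ k = 0 := le_antisymm hk0 (hδ k)
    have hzero : ∀ j, k ≤ j → j ≤ N → δ j = 0 := by
      intro j
      induction j with
      | zero => intro h1 _; exact (Nat.le_zero.mp h1) ▸ hkz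
      | succ m ih =>
        intro h1 h2
        rcases Nat.lt_or_ge m k with hmk | hmk
        · have : k = m + 1 := le_antisymm h1 hmk
          rw [← this]; exact hkz
        · have hm0 := ih hmk (Nat.le_of_succ_le h2)
          have := hrec m (Nat.lt_of_succ_le h2)
          rw [hm0, Real.zero_rpow (by positivity)] at this
          simp at this
          exact le_antisymm this (hδ _)
    rw [hzero N hk le_rfl]
    exact mul_nonneg (hδ 0) (Real.rpow_nonneg hbase.le _)
end

section
/- Let $(a_k)_{k\ge 0}$ be a sequence of non-negative reals and $(\mu_k)_{k\ge 1}$ a sequence of positive reals with $\sum_{k=1}^{\infty}\mu_k=\infty$. Suppose there exist constants $C>0$ and $\alpha\ge 1$ such that $a_{k+1}\le a_k - C\mu_{k+1}a_k^{\alpha}$ for all $k$. Then $\lim_{k\to\infty}a_k=0$. -/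
open Filter

theorem recursion_tendsto_zero (a μ : ℕ → ℝ) (C α : ℝ) (hC : 0 < C) (hα : 1 ≤ α)
    (ha : ∀ k, 0 ≤ a k) (hμ : ∀ k, 0 < μ k)
    (hdiv : Tendsto (fun n => ∑ k ∈ Finset.Icc 1 n, μ k) atTop atTop)
    (hrec : ∀ k, a (k + 1) ≤ a k - C * μ (k + 1) * a k ^ α) :
    Tendsto a atTop (nhds 0) := by
  have hbdd : BddBelow (Set.range a) := ⟨0, by rintro x ⟨k, rfl⟩; exact ha k⟩
  have hanti : Antitone a := by
    apply antitone_nat_of_succ_le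
    intro n
    have h1 : 0 ≤ C * μ (n + 1) * a n ^ α :=
      mul_nonneg (mul_nonneg hC.le (hμ _).le) (Real.rpow_nonneg (ha n) α)
    linarith [hrec n]
  set L := ⨅ k, a k with hLdef
  have htend : Tendsto a atTop (nhds L) := tendsto_atTop_ciInf hanti hbdd
  have hL0 : 0 ≤ L := le_ciInf ha
  have hLle : ∀ k, L ≤ a k := fun k => ciInf_le hbdd k
  rcases eq_or_lt_of_le hL0 with h | hLpos
  · rwa [← h] at htend
  · exfalso
    have key : ∀ n, C * L ^ α * ∑ k ∈ Finset.Icc 1 n, μ k ≤ a 0 - a n := by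
      intro n
      induction n with
      | zero => simp
      | succ n ih =>
        rw [Finset.sum_Icc_succ_top (Nat.one_le_iff_ne_zero.mpr (Nat.succ_ne_zero n))]
        have hpow : L ^ α ≤ a n ^ α :=
          Real.rpow_le_rpow hL0 (hLle n) (by linarith)
        have h2 : C * μ (n + 1) * L ^ α ≤ C * μ (n + 1) * a n ^ α := by
          exact mul_le_mul_of_nonneg_left hpow (mul_nonneg hC.le (hμ _).le)
        have h3 := hrec n
        nlinarith
    have hb : ∀ n, ∑ k ∈ Finset.Icc 1 n, μ k ≤ a 0 / (C * L ^ α) := by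
      intro n
      have hpos : 0 < C * L ^ α := mul_pos hC (Real.rpow_pos_of_pos hLpos α)
      rw [le_div_iff₀ hpos]
      have := key n
      have := ha n
      nlinarith
    obtain ⟨n, hn⟩ := (hdiv.eventually_gt_atTop (a 0 / (C * L ^ α))).exists
    exact absurd (hb n) (not_le.mpr hn)
end

section
/- Let $(a_k)$ be non-negative reals, $\delta>0$, $\mu_k>0$, and constants $A,B>0$, $\alpha\ge 1$, with $\sum_{k=1}^\infty \mu_k=\infty$, satisfying $a_{k+1}\le a_k - \mu_{k+1}(A\,a_k^{\alpha} - B\,\delta^p)$ for all $k$ and some $p>0$. Then there exists $k$ such that $a_k \le 2\,(B/A)^{1/\alpha}\,\delta^{p/\alpha}$. -/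
open Filter

theorem noisy_rate_exists (a μ : ℕ → ℝ) (A B δ p α : ℝ)
    (hA : 0 < A) (hB : 0 < B) (hδ : 0 < δ) (hp : 0 < p) (hα : 1 ≤ α)
    (ha : ∀ k, 0 ≤ a k) (hμ : ∀ k, 0 < μ k)
    (hdiv : Tendsto (fun n => ∑ k ∈ Finset.Icc 1 n, μ k) atTop atTop)
    (hrec : ∀ k, a (k + 1) ≤ a k - μ (k + 1) * (A * a k ^ α - B * δ ^ p)) :
    ∃ k, a k ≤ 2 * (B / A) ^ (1 / α) * δ ^ (p / α) := by
  by_contra h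
  push_neg at h
  set c : ℝ := 2 * (B / A) ^ (1 / α) * δ ^ (p / α) with hc
  have hα0 : (0:ℝ) < α := lt_of_lt_of_le one_pos hα
  have hBA : (0:ℝ) < B / A := div_pos hB hA
  have hc0 : 0 < c := by
    apply mul_pos (mul_pos two_pos _) (Real.rpow_pos_of_pos hδ _)
    exact Real.rpow_pos_of_pos hBA _
  have hcα : c ^ α = 2 ^ α * (B / A) * δ ^ p := by
    rw [hc, Real.mul_rpow (by positivity) (Real.rpow_nonneg hδ.le _),
      Real.mul_rpow (by norm_num) (Real.rpow_nonneg hBA.le _),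
      ← Real.rpow_mul hBA.le, ← Real.rpow_mul hδ.le,
      one_div, inv_mul_cancel₀ hα0.ne', div_mul_cancel₀ _ hα0.ne',
      Real.rpow_one]
  have key : ∀ k, a k ^ α ≥ 2 * (B / A) * δ ^ p := by
    intro k
    have h1 : c ^ α ≤ a k ^ α :=
      Real.rpow_le_rpow hc0.le (h k).le hα0.le
    have h2 : (2:ℝ) ≤ 2 ^ α := by
      calc (2:ℝ) = 2 ^ (1:ℝ) := (Real.rpow_one 2).symm
      _ ≤ 2 ^ α := Real.rpow_le_rpow_left_iff (by norm_num) |>.2 hα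
    have : 2 * (B / A) * δ ^ p ≤ 2 ^ α * (B / A) * δ ^ p := by
      have hd := Real.rpow_pos_of_pos hδ p
      nlinarith [mul_nonneg (sub_nonneg.2 h2) (mul_pos hBA hd).le]
    linarith [hcα ▸ h1]
  have step : ∀ k, a (k + 1) ≤ a k - μ (k + 1) * (B * δ ^ p) := by
    intro k
    have h1 := hrec k
    have h2 : B * δ ^ p ≤ A * a k ^ α - B * δ ^ p := by
      have := key k
      have h3 : A * (2 * (B / A) * δ ^ p) = 2 * B * δ ^ p := by
        field_simp
      nlinarith [Real.rpow_pos_of_pos hδ p]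
    nlinarith [(hμ (k+1)).le, h1]
  have cum : ∀ n, a n ≤ a 0 - (∑ k ∈ Finset.Icc 1 n, μ k) * (B * δ ^ p) := by
    intro n
    induction n with
    | zero => simp
    | succ n ih =>
      rw [Finset.sum_Icc_succ_top (Nat.le_add_left 1 n)]
      have := step n
      nlinarith
  have hBδ : 0 < B * δ ^ p := mul_pos hB (Real.rpow_pos_of_pos hδ p)
  obtain ⟨n, hn⟩ := (hdiv.eventually_gt_atTop (a 0 / (B * δ ^ p))).exists
  have : a 0 < (∑ k ∈ Finset.Icc 1 n, μ k) * (B * δ ^ p) := by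
    rwa [div_lt_iff₀ hBδ] at hn
  linarith [ha n, cum n]
end

section
/- Let $H$ be a real Hilbert space, $x,\hat x\in\mathcal{S}$ with $F_i(\hat x)=y_i$ for all $i$, and suppose each $F_i$ satisfies the tangential cone condition with constant $0<\gamma<1$. Define $\Psi_i(x)=\frac12\|F_i(x)-y_i\|^2$ and $\Psi=\frac1N\sum_i\Psi_i$. Then $\langle \nabla\Psi(x), x-\hat x\rangle \ge 2(1-\gamma)\Psi(x)$, where $\nabla\Psi_i(x)=F_i'(x)^*(F_i(x)-y_i)$. -/
/-! Writing `r = F x - y` and `v = F'(x)(x - x̂)`, the tangential cone condition at `(x, x̂)`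
reads `‖r - v‖ ≤ γ ‖r‖`, so by Cauchy–Schwarz `⟪r, v⟫ = ‖r‖² - ⟪r, r - v⟫ ≥ (1 - γ) ‖r‖²`.
Moving `F'(x)` to the other side of the inner product and averaging over `i` gives the claim. -/

open Finset

theorem one_sub_mul_norm_sq_le_inner_of_norm_sub_le {E : Type*} [NormedAddCommGroup E]
    [InnerProductSpace ℝ E] {r v : E} {γ : ℝ} (h : ‖r - v‖ ≤ γ * ‖r‖) :
    (1 - γ) * ‖r‖ ^ 2 ≤ inner ℝ r v := by
  have hcs : inner ℝ r (r - v) ≤ γ * ‖r‖ ^ 2 :=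
    calc inner ℝ r (r - v) ≤ ‖r‖ * ‖r - v‖ := real_inner_le_norm _ _
      _ ≤ ‖r‖ * (γ * ‖r‖) := mul_le_mul_of_nonneg_left h (norm_nonneg _)
      _ = γ * ‖r‖ ^ 2 := by ring
  rw [inner_sub_right, real_inner_self_eq_norm_sq] at hcs
  linarith

theorem one_sub_mul_norm_sq_le_inner_adjoint_of_tangential_cone
    {H H' : Type*} [NormedAddCommGroup H] [InnerProductSpace ℝ H] [CompleteSpace H]
    [NormedAddCommGroup H'] [InnerProductSpace ℝ H'] [CompleteSpace H']
    {F : H → H'} {A : H →L[ℝ] H'} {x xhat : H} {γ : ℝ}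
    (hcone : ‖F x - F xhat - A (x - xhat)‖ ≤ γ * ‖F x - F xhat‖) :
    (1 - γ) * ‖F x - F xhat‖ ^ 2 ≤
      inner ℝ (ContinuousLinearMap.adjoint A (F x - F xhat)) (x - xhat) := by
  rw [ContinuousLinearMap.adjoint_inner_left]
  exact one_sub_mul_norm_sq_le_inner_of_norm_sub_le hcone

theorem weak_convexity_objective_general
    {H H' : Type*} [NormedAddCommGroup H] [InnerProductSpace ℝ H] [CompleteSpace H]
    [NormedAddCommGroup H'] [InnerProductSpace ℝ H'] [CompleteSpace H']
    (N : ℕ) (S : Set H)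
    (F : Fin N → H → H') (F' : Fin N → H → H →L[ℝ] H') (y : Fin N → H')
    (γ : ℝ)
    (hTCC : ∀ i, ∀ x ∈ S, ∀ x' ∈ S,
      ‖F i x - F i x' - F' i x (x - x')‖ ≤ γ * ‖F i x - F i x'‖)
    (x xhat : H) (hx : x ∈ S) (hxhat : xhat ∈ S) (hsol : ∀ i, F i xhat = y i) :
    2 * (1 - γ) * ((N : ℝ)⁻¹ * ∑ i, (1 / 2) * ‖F i x - y i‖ ^ 2) ≤
      inner ℝ ((N : ℝ)⁻¹ • ∑ i, (ContinuousLinearMap.adjoint (F' i x)) (F i x - y i))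
        (x - xhat) := by
  have hterm : ∀ i, (1 - γ) * ‖F i x - y i‖ ^ 2 ≤
      inner ℝ (ContinuousLinearMap.adjoint (F' i x) (F i x - y i)) (x - xhat) := fun i => by
    simpa only [hsol i] using
      one_sub_mul_norm_sq_le_inner_adjoint_of_tangential_cone (hTCC i x hx xhat hxhat)
  rw [real_inner_smul_left, sum_inner]
  calc 2 * (1 - γ) * ((N : ℝ)⁻¹ * ∑ i, (1 / 2) * ‖F i x - y i‖ ^ 2)
      = (N : ℝ)⁻¹ * ∑ i, (1 - γ) * ‖F i x - y i‖ ^ 2 := by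
        simp only [mul_sum]
        exact sum_congr rfl fun i _ => by ring
    _ ≤ _ := by gcongr with i; exact hterm i

theorem weak_convexity_objective
    {H H' : Type*} [NormedAddCommGroup H] [InnerProductSpace ℝ H] [CompleteSpace H]
    [NormedAddCommGroup H'] [InnerProductSpace ℝ H'] [CompleteSpace H']
    (N : ℕ) (hN : 0 < N) (S : Set H)
    (F : Fin N → H → H') (F' : Fin N → H → H →L[ℝ] H') (y : Fin N → H')
    (γ : ℝ) (hγ0 : 0 < γ) (hγ1 : γ < 1)
    (hTCC : ∀ i, ∀ x ∈ S, ∀ x' ∈ S,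
      ‖F i x - F i x' - F' i x (x - x')‖ ≤ γ * ‖F i x - F i x'‖)
    (x xhat : H) (hx : x ∈ S) (hxhat : xhat ∈ S) (hsol : ∀ i, F i xhat = y i) :
    2 * (1 - γ) * ((N : ℝ)⁻¹ * ∑ i, (1 / 2) * ‖F i x - y i‖ ^ 2) ≤
      inner ℝ ((N : ℝ)⁻¹ • ∑ i, (ContinuousLinearMap.adjoint (F' i x)) (F i x - y i))
        (x - xhat) :=
  weak_convexity_objective_general N S F F' y γ hTCC x xhat hx hxhat hsol
end

section
/- Let $\mathcal{X}$ be a smooth Banach space with duality map $J_p$ and Bregman distance $D$ as above, with $p>1$ and $p^*$ the conjugate exponent. If $D(x,x^\dagger)\le C<\infty$, then $\|x\|^p\le (2p^*)^p\max\{\|x^\dagger\|^p, C\}$. -/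
theorem bregman_coercivity
    {X : Type*} [NormedAddCommGroup X] [NormedSpace ℝ X]
    (p ps : ℝ) (hp : 1 < p) (hps : 1 / p + 1 / ps = 1)
    (J : X → (X →L[ℝ] ℝ))
    (hJ1 : ∀ z, J z z = ‖z‖ ^ p) (hJ2 : ∀ z, ‖J z‖ = ‖z‖ ^ (p - 1))
    (x xdag : X) (C : ℝ)
    (hC : 1 / ps * ‖x‖ ^ p + 1 / p * ‖xdag‖ ^ p - J x xdag ≤ C) :
    ‖x‖ ^ p ≤ (2 * ps) ^ p * max (‖xdag‖ ^ p) C := by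
  have hp0 : (0 : ℝ) < p := by linarith
  have hpne : p ≠ 0 := ne_of_gt hp0
  have hpsne : ps ≠ 0 := by
    intro h
    rw [h, div_zero, add_zero] at hps
    have : p = 1 := by field_simp at hps; linarith
    linarith
  have hps_eq : ps = p / (p - 1) := by
    have hp1 : p - 1 ≠ 0 := by intro h; apply hpne; linarith
    field_simp at hps ⊢
    linarith
  have hps1 : 1 < ps := by
    rw [hps_eq]
    rw [lt_div_iff₀ (by linarith : (0:ℝ) < p - 1)]
    linarith
  have hps0 : (0 : ℝ) < ps := by linarith
  have h2ps : (0 : ℝ) < 2 * ps := by linarith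
  have h2ps1 : (1 : ℝ) ≤ 2 * ps := by linarith
  have hmax0 : 0 ≤ max (‖xdag‖ ^ p) C :=
    le_max_of_le_left (Real.rpow_nonneg (norm_nonneg _) p)
  have hpow : (2 * ps) ≤ (2 * ps) ^ p := by
    nth_rewrite 1 [← Real.rpow_one (2 * ps)]
    exact Real.rpow_le_rpow_of_exponent_le h2ps1 hp.le
  rcases le_or_gt ‖x‖ (2 * ps * ‖xdag‖) with hcase | hcase
  · calc ‖x‖ ^ p ≤ (2 * ps * ‖xdag‖) ^ p :=
          Real.rpow_le_rpow (norm_nonneg x) hcase hp0.le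
      _ = (2 * ps) ^ p * ‖xdag‖ ^ p := Real.mul_rpow h2ps.le (norm_nonneg _)
      _ ≤ (2 * ps) ^ p * max (‖xdag‖ ^ p) C := by
          apply mul_le_mul_of_nonneg_left (le_max_left _ _)
          exact Real.rpow_nonneg h2ps.le p
  · have hx0 : (0 : ℝ) < ‖x‖ := lt_of_le_of_lt (by positivity) hcase
    have hJb : J x xdag ≤ ‖x‖ ^ (p - 1) * ‖xdag‖ := by
      have h1 := (J x).le_opNorm xdag
      rw [hJ2] at h1
      calc J x xdag ≤ |J x xdag| := le_abs_self _
        _ = ‖J x xdag‖ := (Real.norm_eq_abs _).symm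
        _ ≤ ‖x‖ ^ (p - 1) * ‖xdag‖ := h1
    have hstep : ‖x‖ ^ (p - 1) * ‖xdag‖ ≤ ‖x‖ ^ p / (2 * ps) := by
      have hxdag : ‖xdag‖ ≤ ‖x‖ / (2 * ps) := by
        rw [le_div_iff₀ h2ps]
        nlinarith
      calc ‖x‖ ^ (p - 1) * ‖xdag‖ ≤ ‖x‖ ^ (p - 1) * (‖x‖ / (2 * ps)) := by
            apply mul_le_mul_of_nonneg_left hxdag
            exact Real.rpow_nonneg (norm_nonneg _) _
        _ = ‖x‖ ^ p / (2 * ps) := by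
            rw [Real.rpow_sub hx0, Real.rpow_one]
            field_simp
    have hY : 0 ≤ ‖xdag‖ ^ p := Real.rpow_nonneg (norm_nonneg _) p
    have hkey : 1 / ps * ‖x‖ ^ p - ‖x‖ ^ p / (2 * ps) ≤ C := by
      have h1p : 0 ≤ 1 / p * ‖xdag‖ ^ p := by positivity
      linarith
    have heq : 1 / ps * ‖x‖ ^ p - ‖x‖ ^ p / (2 * ps) = ‖x‖ ^ p / (2 * ps) := by
      field_simp
      ring
    rw [heq] at hkey
    have hXC : ‖x‖ ^ p ≤ C * (2 * ps) := (div_le_iff₀ h2ps).mp hkey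
    have hCm : C ≤ max (‖xdag‖ ^ p) C := le_max_right _ _
    calc ‖x‖ ^ p ≤ C * (2 * ps) := hXC
      _ ≤ max (‖xdag‖ ^ p) C * (2 * ps) := mul_le_mul_of_nonneg_right hCm h2ps.le
      _ ≤ max (‖xdag‖ ^ p) C * (2 * ps) ^ p := mul_le_mul_of_nonneg_left hpow hmax0
      _ = (2 * ps) ^ p * max (‖xdag‖ ^ p) C := mul_comm _ _
end

section
/- Let $H$ be a real Hilbert space, $F_i:\mathcal{S}\subset H\to H_i$ Fr\'echet differentiable on a convex set $\mathcal{S}$ containing the ball $B_\nu(x^\dagger)=\{z:\frac12\|z-x^\dagger\|^2\le\nu\}$, with $\|F_i'(x)\|\le L_{\max}$ and tangential cone constant $0<\gamma<1$ on $\mathcal{S}$, where $F(x^\dagger)=y$. Consider SGD iterates $x_{k+1}=x_k-\mu_{k+1}F_{i_{k+1}}'(x_k)^*(F_{i_{k+1}}(x_k)-y_{i_{k+1}})$ with $x_0\in B_\nu(x^\dagger)$ and step-sizes satisfying $1-\gamma-\frac{L_{\max}^2}{2}\mu_k\ge C>0$ for all $k$. Then $x_k\in B_\nu(x^\dagger)$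 for all $k\ge 1$, for every realization of the random indices $i_k$. -/
open scoped RealInnerProductSpace

private lemma sgd_aux (R E Gn a m γ Lmax C : ℝ) (hm : 0 < m) (hC : 0 < C)
    (hE : 0 ≤ E)
    (hinner : (1 - γ) * E ^ 2 ≤ a) (hg2 : Gn ^ 2 ≤ Lmax ^ 2 * E ^ 2)
    (hCle : Lmax ^ 2 / 2 * m ≤ 1 - γ - C) :
    R ^ 2 - 2 * (m * a) + m ^ 2 * Gn ^ 2 ≤ R ^ 2 := by
  nlinarith [mul_le_mul_of_nonneg_left hinner hm.le,
    mul_le_mul_of_nonneg_left hg2 (sq_nonneg m),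
    mul_le_mul_of_nonneg_right (mul_le_mul_of_nonneg_left hCle hm.le) (sq_nonneg E),
    sq_nonneg E, mul_pos hm hC]


theorem sgd_iterates_stay_in_ball
    {H H' : Type*} [NormedAddCommGroup H] [InnerProductSpace ℝ H] [CompleteSpace H]
    [NormedAddCommGroup H'] [InnerProductSpace ℝ H'] [CompleteSpace H']
    (N : ℕ) (S : Set H) (hS : Convex ℝ S)
    (F : Fin N → H → H') (F' : Fin N → H → H →L[ℝ] H') (y : Fin N → H')
    (xdag : H) (ν : ℝ) (hν : 0 < ν)
    (hball : {z : H | (1 / 2) * ‖z - xdag‖ ^ 2 ≤ ν} ⊆ S)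
    (hsol : ∀ i, F i xdag = y i)
    (Lmax γ : ℝ) (hγ0 : 0 < γ) (hγ1 : γ < 1)
    (hL : ∀ i, ∀ x ∈ S, ‖F' i x‖ ≤ Lmax)
    (hTCC : ∀ i, ∀ x ∈ S, ∀ x' ∈ S,
      ‖F i x - F i x' - F' i x (x - x')‖ ≤ γ * ‖F i x - F i x'‖)
    (μ : ℕ → ℝ) (hμ : ∀ k, 0 < μ k)
    (C : ℝ) (hC : 0 < C) (hstep : ∀ k, C ≤ 1 - γ - Lmax ^ 2 / 2 * μ k)
    (idx : ℕ → Fin N) (x : ℕ → H)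
    (hx0 : (1 / 2) * ‖x 0 - xdag‖ ^ 2 ≤ ν)
    (hrec : ∀ k, x (k + 1) = x k - μ (k + 1) •
      (ContinuousLinearMap.adjoint (F' (idx (k + 1)) (x k)))
        (F (idx (k + 1)) (x k) - y (idx (k + 1)))) :
    ∀ k, (1 / 2) * ‖x k - xdag‖ ^ 2 ≤ ν := by
  intro k
  induction k with
  | zero => exact hx0
  | succ k ih =>
    have hxkS : x k ∈ S := hball ih
    have hxdS : xdag ∈ S := by
      apply hball
      simp only [Set.mem_setOf_eq, sub_self, norm_zero]
      nlinarith
    set i := idx (k + 1) with hi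
    set A := F' i (x k) with hA
    set e := F i (x k) - y i with he
    set r := x k - xdag with hr
    set m := μ (k + 1) with hm
    have hmpos : 0 < m := hμ (k + 1)
    -- TCC bound
    have htcc : ‖e - A r‖ ≤ γ * ‖e‖ := by
      have := hTCC i (x k) hxkS xdag hxdS
      rw [hsol i] at this
      exact this
    -- inner product lower bound
    have hinner : (1 - γ) * ‖e‖ ^ 2 ≤ ⟪A r, e⟫ := by
      have h1 : ⟪A r, e⟫ = ‖e‖ ^ 2 - ⟪e - A r, e⟫ := by
        rw [inner_sub_left, real_inner_self_eq_norm_sq]; ring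
      have h2 : ⟪e - A r, e⟫ ≤ γ * ‖e‖ ^ 2 := by
        calc ⟪e - A r, e⟫ ≤ ‖e - A r‖ * ‖e‖ := real_inner_le_norm _ _
          _ ≤ γ * ‖e‖ * ‖e‖ := by
              apply mul_le_mul_of_nonneg_right htcc (norm_nonneg _)
          _ = γ * ‖e‖ ^ 2 := by ring
      rw [h1]; linarith
    -- gradient norm bound
    have hLnn : 0 ≤ Lmax := le_trans (norm_nonneg _) (hL i (x k) hxkS)
    have hg : ‖(ContinuousLinearMap.adjoint A) e‖ ≤ Lmax * ‖e‖ := by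
      calc ‖(ContinuousLinearMap.adjoint A) e‖
          ≤ ‖ContinuousLinearMap.adjoint A‖ * ‖e‖ := (ContinuousLinearMap.adjoint A).le_opNorm e
        _ = ‖A‖ * ‖e‖ := by rw [ContinuousLinearMap.adjoint.norm_map]
        _ ≤ Lmax * ‖e‖ := mul_le_mul_of_nonneg_right (hL i (x k) hxkS) (norm_nonneg _)
    have hg2 : ‖(ContinuousLinearMap.adjoint A) e‖ ^ 2 ≤ Lmax ^ 2 * ‖e‖ ^ 2 := by
      nlinarith [norm_nonneg ((ContinuousLinearMap.adjoint A) e)]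
    -- expansion of the squared norm
    have hexp : ‖x (k + 1) - xdag‖ ^ 2
        = ‖r‖ ^ 2 - 2 * (m * ⟪A r, e⟫) + m ^ 2 * ‖(ContinuousLinearMap.adjoint A) e‖ ^ 2 := by
      have hx1 : x (k + 1) - xdag = r - m • (ContinuousLinearMap.adjoint A) e := by
        rw [hrec k, hr]; abel
      rw [hx1, @norm_sub_sq_real, inner_smul_right, norm_smul]
      have hadj : ⟪r, (ContinuousLinearMap.adjoint A) e⟫ = ⟪A r, e⟫ := by
        rw [ContinuousLinearMap.adjoint_inner_right]
      rw [hadj]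
      rw [mul_pow, Real.norm_eq_abs, sq_abs]
    have hCle : Lmax ^ 2 / 2 * m ≤ 1 - γ - C := by
      have := hstep (k + 1); linarith
    have hkey : ‖x (k + 1) - xdag‖ ^ 2 ≤ ‖r‖ ^ 2 := by
      rw [hexp]
      exact sgd_aux ‖r‖ ‖e‖ ‖(ContinuousLinearMap.adjoint A) e‖ (⟪A r, e⟫) m γ Lmax C
        hmpos hC (norm_nonneg _) hinner hg2 hCle
    calc (1 / 2) * ‖x (k + 1) - xdag‖ ^ 2 ≤ (1 / 2) * ‖r‖ ^ 2 := by linarith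
      _ ≤ ν := ih
end
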